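/- arXiv:2406.19689 — 6 statements merged into one kernel-verified Lean document; each statement's English description precedes it below -/
import Mathlib

section
/- For strict preference profiles, if a committee voting rule f satisfies PSC, then the reverse sequential rule f^RS also satisfies PSC: for every profile R, committee size k, integer ℓ ≥ 1, and solid coalition N' supporting a set C' with |N'| > ℓ·n/(k+1), either C' ⊆ f^RS(R,k) or |f^RS(R,k) ∩ C'| ≥ ℓ. -/
open Finset

/-- In the profile restricted to the available candidates `X` (preferences given by rank
functions `rk`, smaller rank = more preferred), `N'` is a solid coalition supporting `C'`:
every voter of `N'` strictly prefers every member of `C'` to every candidate of `X \ C'`. -/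
def SolidIn {V C : Type*} [DecidableEq C] (rk : V → C → ℕ) (X : Finset C)
    (N' : Finset V) (C' : Finset C) : Prop :=
  ∀ i ∈ N', ∀ x ∈ C', ∀ y ∈ X \ C', rk i x < rk i y

/-- The committee `W` satisfies PSC (Droop quota) for the profile restricted to `X`
and committee size `k`. -/
def PSCwrt {V C : Type*} [Fintype V] [DecidableEq C] (rk : V → C → ℕ) (X : Finset C)
    (k : ℕ) (W : Finset C) : Prop :=
  ∀ ℓ : ℕ, 1 ≤ ℓ → ∀ (N' : Finset V) (C' : Finset C), C' ⊆ X →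
    SolidIn rk X N' C' →
    (ℓ : ℚ) * (Fintype.card V : ℚ) / ((k : ℚ) + 1) < (N'.card : ℚ) →
    C' ⊆ W ∨ ℓ ≤ (W ∩ C').card

/-- Auxiliary recursion for the reverse sequential rule: after `j` elimination steps. -/
def RSaux {V C : Type*} [Fintype C] (f : (V → C → ℕ) → Finset C → ℕ → Finset C)
    (rk : V → C → ℕ) : ℕ → Finset C
  | 0 => Finset.univ
  | j + 1 => f rk (RSaux f rk j) (Fintype.card C - (j + 1))

/-- The reverse sequential rule `f^RS`: `f^RS(R, m) = C` and
`f^RS(R, k) = f(R|_{f^RS(R, k+1)}, k)` for `k < m`. -/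
def RS {V C : Type*} [Fintype C] (f : (V → C → ℕ) → Finset C → ℕ → Finset C)
    (rk : V → C → ℕ) (k : ℕ) : Finset C :=
  RSaux f rk (Fintype.card C - k)

/-! Downward induction on `k`. The committee `f^RS(R, k)` is a PSC committee of size `k` for the
profile restricted to `W = f^RS(R, k + 1)`, in which `N'` is still a solid coalition for `C' ∩ W`,
and the quota for size `k + 1` is below the one for `k`. So either `C' ⊆ W`, and PSC of `f` at `W`
is already the claim, or `W` contains `ℓ` members of `C'`, and `f` keeps either all of `C' ∩ W` or
`ℓ` of its members. -/

theorem SolidIn.inter_of_subset {V C : Type*} [DecidableEq C] {rk : V → C → ℕ}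
    {X Y : Finset C} {N' : Finset V} {C' : Finset C} (h : SolidIn rk X N' C') (hYX : Y ⊆ X) :
    SolidIn rk Y N' (C' ∩ Y) := by
  intro i hi x hx y hy
  simp only [mem_sdiff, mem_inter, not_and] at hx hy
  exact h i hi x hx.1 y (mem_sdiff.2 ⟨hYX hy.1, fun hyC => hy.2 hyC hy.1⟩)

theorem droop_quota_lt_of_le {ℓ n k t : ℕ} {q : ℚ} (hkt : k ≤ t)
    (h : (ℓ : ℚ) * n / ((k : ℚ) + 1) < q) : (ℓ : ℚ) * n / ((t : ℚ) + 1) < q :=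
  lt_of_le_of_lt (by gcongr) h

theorem subset_or_le_card_inter_of_inter {α : Type*} [DecidableEq α] {W W' C' : Finset α}
    {ℓ : ℕ} (hW : C' ⊆ W ∨ ℓ ≤ (W ∩ C').card)
    (hW' : C' ∩ W ⊆ W' ∨ ℓ ≤ (W' ∩ (C' ∩ W)).card) :
    C' ⊆ W' ∨ ℓ ≤ (W' ∩ C').card := by
  rcases hW with hC'W | hℓW
  · rwa [inter_eq_left.2 hC'W] at hW'
  · right
    rcases hW' with hC'WW' | hℓW'
    · refine hℓW.trans (card_le_card fun x hx => ?_)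
      rw [mem_inter] at hx ⊢
      exact ⟨hC'WW' (mem_inter.2 ⟨hx.2, hx.1⟩), hx.2⟩
    · exact hℓW'.trans (card_le_card (inter_subset_inter Subset.rfl inter_subset_left))

section RS

variable {V C : Type*} [Fintype C] (f : (V → C → ℕ) → Finset C → ℕ → Finset C)
  {rk : V → C → ℕ}

theorem RS_fintypeCard : RS f rk (Fintype.card C) = univ := by
  simp [RS, RSaux]

theorem RS_of_lt {k : ℕ} (hk : k < Fintype.card C) : RS f rk k = f rk (RS f rk (k + 1)) k := by
  obtain ⟨j, hj⟩ : ∃ j, Fintype.card C - k = j + 1 := ⟨Fintype.card C - (k + 1), by omega⟩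
  have hRS : RS f rk (k + 1) = RSaux f rk j := by
    rw [RS]
    congr 1
    omega
  rw [RS, hj, RSaux, hRS]
  congr 1
  omega

theorem card_RS (hCard : ∀ X k, k ≤ X.card → (f rk X k).card = k) {k : ℕ}
    (hk : k ≤ Fintype.card C) : (RS f rk k).card = k := by
  induction hk using Nat.decreasingInduction with
  | self => simp [RS_fintypeCard]
  | of_succ k hk ih =>
    rw [RS_of_lt f hk]
    exact hCard _ _ (ih.symm ▸ k.le_succ)

theorem psc_RS [Fintype V] [DecidableEq C] (hCard : ∀ X k, k ≤ X.card → (f rk X k).card = k)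
    (hPSC : ∀ X k, k ≤ X.card → PSCwrt rk X k (f rk X k)) {k : ℕ}
    (hk : k ≤ Fintype.card C) : PSCwrt rk univ k (RS f rk k) := by
  induction hk using Nat.decreasingInduction with
  | self =>
    intro ℓ _ N' C' _ _ _
    exact Or.inl (RS_fintypeCard f ▸ subset_univ C')
  | of_succ k hk ih =>
    intro ℓ hℓ N' C' _ hsolid hquota
    have hkW : k ≤ (RS f rk (k + 1)).card := by
      rw [card_RS f hCard hk]
      exact k.le_succ
    rw [RS_of_lt f hk]
    exact subset_or_le_card_inter_of_inter
      (ih ℓ hℓ N' C' (subset_univ C') hsolid (droop_quota_lt_of_le k.le_succ hquota))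
      (hPSC _ k hkW ℓ hℓ N' _ inter_subset_right (hsolid.inter_of_subset (subset_univ _)) hquota)

end RS

theorem revSeq_psc_general {V C : Type*} [Fintype V] [Fintype C] [DecidableEq C]
    (f : (V → C → ℕ) → Finset C → ℕ → Finset C)
    (hCard : ∀ (rk : V → C → ℕ) (X : Finset C) (k : ℕ),
      (∀ i, Function.Injective (rk i)) → k ≤ X.card → (f rk X k).card = k)
    (hPSC : ∀ (rk : V → C → ℕ) (X : Finset C) (k : ℕ),
      (∀ i, Function.Injective (rk i)) → k ≤ X.card → PSCwrt rk X k (f rk X k))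
    (rk : V → C → ℕ) (hrk : ∀ i, Function.Injective (rk i)) :
    ∀ k, 1 ≤ k → k ≤ Fintype.card C → ∀ ℓ : ℕ, 1 ≤ ℓ →
      ∀ (N' : Finset V) (C' : Finset C), SolidIn rk Finset.univ N' C' →
      (ℓ : ℚ) * (Fintype.card V : ℚ) / ((k : ℚ) + 1) < (N'.card : ℚ) →
      C' ⊆ RS f rk k ∨ ℓ ≤ (RS f rk k ∩ C').card := by
  intro k _ hk ℓ hℓ N' C' hsolid hquota
  exact psc_RS f (fun X k => hCard rk X k hrk) (fun X k => hPSC rk X k hrk) hk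
    ℓ hℓ N' C' (subset_univ C') hsolid hquota

/-- If a committee voting rule `f` (for strict preferences) satisfies PSC, then its reverse
sequential rule `f^RS` also satisfies PSC: for every committee size `k`, every `ℓ ≥ 1`, and
every solid coalition `N'` supporting `C'` with `|N'| > ℓ·n/(k+1)`, either `C' ⊆ f^RS(R,k)`
or `|f^RS(R,k) ∩ C'| ≥ ℓ`. -/
theorem revSeq_psc {V C : Type*} [Fintype V] [Fintype C] [DecidableEq C]
    (f : (V → C → ℕ) → Finset C → ℕ → Finset C)
    (hSub : ∀ (rk : V → C → ℕ) (X : Finset C) (k : ℕ),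
      (∀ i, Function.Injective (rk i)) → k ≤ X.card → f rk X k ⊆ X)
    (hCard : ∀ (rk : V → C → ℕ) (X : Finset C) (k : ℕ),
      (∀ i, Function.Injective (rk i)) → k ≤ X.card → (f rk X k).card = k)
    (hPSC : ∀ (rk : V → C → ℕ) (X : Finset C) (k : ℕ),
      (∀ i, Function.Injective (rk i)) → k ≤ X.card → PSCwrt rk X k (f rk X k))
    (rk : V → C → ℕ) (hrk : ∀ i, Function.Injective (rk i)) :
    ∀ k, 1 ≤ k → k ≤ Fintype.card C → ∀ ℓ : ℕ, 1 ≤ ℓ →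
      ∀ (N' : Finset V) (C' : Finset C), SolidIn rk Finset.univ N' C' →
      (ℓ : ℚ) * (Fintype.card V : ℚ) / ((k : ℚ) + 1) < (N'.card : ℚ) →
      C' ⊆ RS f rk k ∨ ℓ ≤ (RS f rk k ∩ C').card :=
  revSeq_psc_general f hCard hPSC rk hrk
end

section
/- No committee voting rule satisfies both committee monotonicity and Rank-JR when there are n ≥ 4 voters and m ≥ n/q + 1 candidates, for any divisor q of n with n/q ≥ 4. -/
/-!
Split the voters into `L = n / q` blocks of `q` voters each, block `j` ranking candidate `j` first
and candidate `L` second. At committee size `L` every block is a group of `n / L` voters with a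
common first choice, so Rank-JR forces the committee to be exactly `{0, …, L - 1}`. By monotonicity
the committee of size `2` lies inside it, so it misses candidate `L` and the first choices of at
least `L - 2 ≥ L / 2` blocks. Those blocks form a group of at least `n / 2` voters who all rank `L`
among their top two, yet none of their top two candidates is elected: Rank-JR fails at rank `2`.
-/

open Finset

theorem exists_equiv_apply_eq_zero_and_apply_eq_one {m : ℕ} (hm : 1 < m) {a b : Fin m}
    (hab : a ≠ b) : ∃ σ : Fin m ≃ Fin m, (σ a : ℕ) = 0 ∧ (σ b : ℕ) = 1 := by
  set z : Fin m := ⟨0, by omega⟩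
  set τ := Equiv.swap a z
  have hτb : τ b ≠ z := by
    rw [Ne, ← Equiv.swap_apply_left a z, τ.injective.eq_iff]; exact hab.symm
  have hz : z ≠ ⟨1, hm⟩ := Fin.ne_of_val_ne zero_ne_one
  refine ⟨τ.trans (Equiv.swap (τ b) ⟨1, hm⟩), ?_, ?_⟩
  · simp [τ, Equiv.swap_apply_of_ne_of_ne hτb.symm hz, z]
  · simp

theorem exists_card_fiber_eq {α β : Type*} [Fintype α] [DecidableEq β] (T : Finset β) {q : ℕ}
    (h : Fintype.card α = #T * q) :
    ∃ g : α → β, (∀ a, g a ∈ T) ∧ ∀ b, #{a | g a = b} = if b ∈ T then q else 0 := by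
  let e : α ≃ T × Fin q := Fintype.equivOfCardEq (by simpa using h)
  refine ⟨fun a => (e a).1, fun a => (e a).1.2, fun b => ?_⟩
  rw [card_equiv e (t := {p | (p.1 : β) = b}) (by simp)]
  split_ifs with hb
  · rw [show ({p | (p.1 : β) = b} : Finset (T × Fin q)) = {⟨b, hb⟩} ×ˢ univ by
      ext ⟨⟨c, hc⟩, t⟩; simp [eq_comm]]
    simp
  · simp only [card_eq_zero, filter_eq_empty_iff]
    exact fun p _ hp => hb (hp ▸ p.1.2)

theorem subset_of_forall_subset_succ {α : Type*} {W : ℕ → Finset α} {a m : ℕ}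
    (h : ∀ k, a ≤ k → k < m → W k ⊆ W (k + 1)) {b c : ℕ} (hab : a ≤ b) (hbc : b ≤ c)
    (hcm : c ≤ m) : W b ⊆ W c := by
  induction c, hbc using Nat.le_induction with
  | base => rfl
  | succ c hbc ih => exact (ih (by omega)).trans (h c (by omega) (by omega))

theorem card_filter_mem_le_mul {α β : Type*} [Fintype α] [DecidableEq β] {g : α → β} {q : ℕ}
    (hg : ∀ b, #{a | g a = b} ≤ q) (W : Finset β) : #{a | g a ∈ W} ≤ q * #W :=
  card_le_mul_card_image_of_maps_to (fun a ha => (mem_filter.1 ha).2) q fun b _ =>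
    (card_le_card fun a ha => by simp_all).trans (hg b)

section RankJR

variable {n m : ℕ}

def IsRankJR (R : Fin n → Fin m ≃ Fin m) (k : ℕ) (W : Finset (Fin m)) : Prop :=
  ∀ r : ℕ, 1 ≤ r → r ≤ m → ∀ N' : Finset (Fin n), (n : ℚ) / (k : ℚ) ≤ (N'.card : ℚ) →
    (∃ x, ∀ i ∈ N', ((R i) x : ℕ) + 1 ≤ r) → ∃ x ∈ W, ∃ i ∈ N', ((R i) x : ℕ) + 1 ≤ r

variable {R : Fin n → Fin m ≃ Fin m} {k : ℕ} {W : Finset (Fin m)} {top : Fin n → Fin m}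

theorem IsRankJR.mem_of_le_card_fiber (h : IsRankJR R k W) (hm : 1 ≤ m)
    (htop : ∀ i, (R i (top i) : ℕ) = 0) {t : Fin m} (ht : (n : ℚ) / k ≤ #{i | top i = t}) :
    t ∈ W := by
  obtain ⟨x, hxW, i, hi, hx⟩ :=
    h 1 le_rfl hm _ ht ⟨t, fun i hi => by simp [← (mem_filter.1 hi).2, htop]⟩
  rw [mem_filter] at hi
  have hxt : R i x = R i (top i) := Fin.ext (by rw [htop i]; omega)
  rwa [(R i).injective hxt, hi.2] at hxW

theorem IsRankJR.card_filter_notMem_lt (h : IsRankJR R k W) (hm : 2 ≤ m)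
    (htop : ∀ i, (R i (top i) : ℕ) = 0) {e : Fin m} (he : ∀ i, (R i e : ℕ) = 1) (heW : e ∉ W) :
    (#{i | top i ∉ W} : ℚ) < n / k := by
  by_contra! hN
  obtain ⟨x, hxW, i, hi, hx⟩ := h 2 one_le_two hm _ hN ⟨e, by simp [he]⟩
  rw [mem_filter] at hi
  obtain hx | hx : (R i x : ℕ) = R i (top i) ∨ (R i x : ℕ) = R i e := by
    rw [htop i, he i]; omega
  · exact hi.2 ((R i).injective (Fin.ext hx) ▸ hxW)
  · exact heW ((R i).injective (Fin.ext hx) ▸ hxW)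

end RankJR

theorem no_committee_monotone_rankJR_general (n q m : ℕ) (hq : q ∣ n)
    (hl : 4 ≤ n / q) (hm : n / q + 1 ≤ m) :
    ¬ ∃ f : (Fin n → (Fin m ≃ Fin m)) → ℕ → Finset (Fin m),
      -- f is a committee voting rule: it selects committees of the target size
      (∀ R k, 1 ≤ k → k ≤ m → (f R k).card = k) ∧
      -- committee monotonicity
      (∀ R k, 1 ≤ k → k < m → f R k ⊆ f R (k + 1)) ∧
      -- Rank-JR
      (∀ R k, 1 ≤ k → k ≤ m → ∀ r : ℕ, 1 ≤ r → r ≤ m →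
        ∀ N' : Finset (Fin n), (n : ℚ) / (k : ℚ) ≤ (N'.card : ℚ) →
        (∃ x, ∀ i ∈ N', ((R i) x : ℕ) + 1 ≤ r) →
        ∃ x ∈ f R k, ∃ i ∈ N', ((R i) x : ℕ) + 1 ≤ r) := by
  rintro ⟨f, hcard, hmono, hjr⟩
  replace hjr : ∀ R k, 1 ≤ k → k ≤ m → IsRankJR R k (f R k) := hjr
  set L := n / q
  have hLm : L < m := by omega
  have hnqL : (n : ℚ) = q * L := by exact_mod_cast (Nat.mul_div_cancel' hq).symm
  set e : Fin m := ⟨L, hLm⟩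
  obtain ⟨top, htop_lt, htop⟩ := exists_card_fiber_eq (α := Fin n) (Iio e) (q := q)
    (by simp [e, L, Nat.div_mul_cancel hq])
  choose R hRtop hRe using fun i => exists_equiv_apply_eq_zero_and_apply_eq_one (by omega)
    (ne_of_mem_of_not_mem (htop_lt i) notMem_Iio_self)
  have hWL : f R L = Iio e := by
    refine (eq_of_subset_of_card_le (fun t ht => (hjr R L (by omega) hLm.le).mem_of_le_card_fiber
      (by omega) hRtop ?_) ?_).symm
    · rw [htop, if_pos ht, hnqL, mul_div_cancel_right₀ _ (by positivity)]
    · simp [hcard R L (by omega) hLm.le, e]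
  have heW : e ∉ f R 2 := fun he => notMem_Iio_self (hWL ▸
    subset_of_forall_subset_succ (hmono R) one_le_two (by omega) hLm.le he)
  have hlt := (hjr R 2 one_le_two (by omega)).card_filter_notMem_lt (by omega) hRtop hRe heW
  have hfib (b : Fin m) : #{i | top i = b} ≤ q := (htop b).trans_le (by split_ifs <;> omega)
  have hle : #{i | top i ∈ f R 2} ≤ q * 2 :=
    (card_filter_mem_le_mul hfib _).trans_eq (by rw [hcard R 2 one_le_two (by omega)])
  have hsplit := card_filter_add_card_filter_not (s := univ) (fun i => top i ∈ f R 2)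
  rw [card_univ, Fintype.card_fin] at hsplit
  rw [lt_div_iff₀ two_pos] at hlt
  have hlt' : #{i | top i ∉ f R 2} * 2 < n := by exact_mod_cast hlt
  have h4q : q * 4 ≤ n := Nat.mul_div_cancel' hq ▸ Nat.mul_le_mul_left q hl
  omega

/-- No committee voting rule satisfies both committee monotonicity and Rank-JR when there
are `n ≥ 4` voters and `m ≥ n/q + 1` candidates, for any divisor `q` of `n` with `n/q ≥ 4`.
A strict profile assigns to each voter a bijective ranking `R i : Fin m ≃ Fin m`, where the
rank of candidate `x` for voter `i` is `(R i x : ℕ) + 1`. -/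
theorem no_committee_monotone_rankJR (n q m : ℕ) (hn : 4 ≤ n) (hq : q ∣ n)
    (hl : 4 ≤ n / q) (hm : n / q + 1 ≤ m) :
    ¬ ∃ f : (Fin n → (Fin m ≃ Fin m)) → ℕ → Finset (Fin m),
      -- f is a committee voting rule: it selects committees of the target size
      (∀ R k, 1 ≤ k → k ≤ m → (f R k).card = k) ∧
      -- committee monotonicity
      (∀ R k, 1 ≤ k → k < m → f R k ⊆ f R (k + 1)) ∧
      -- Rank-JR
      (∀ R k, 1 ≤ k → k ≤ m → ∀ r : ℕ, 1 ≤ r → r ≤ m →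
        ∀ N' : Finset (Fin n), (n : ℚ) / (k : ℚ) ≤ (N'.card : ℚ) →
        (∃ x, ∀ i ∈ N', ((R i) x : ℕ) + 1 ≤ r) →
        ∃ x ∈ f R k, ∃ i ∈ N', ((R i) x : ℕ) + 1 ≤ r) :=
  no_committee_monotone_rankJR_general n q m hq hl hm
end

section
/- In a profile with ℓ = n/q groups of q voters each, where group j ranks candidate c_j first and candidate d second (ℓ ≥ 4), any committee of size 2 satisfying Rank-JR must contain candidate d. -/
open Finset

/-!
If `d ∉ W`, then `W` contains the top candidate of at most two of the `ℓ ≥ 4` groups, so the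
voters of the remaining `ℓ - 2 ≥ ℓ / 2` groups form at least half of the electorate. They all rank
`d` within their top two, so Rank-JR at rank `2` forces `W` to contain a candidate ranked first or
second by one of them, i.e. that voter's own top candidate or `d`, both of which lie outside `W`.
-/

theorem card_filter_mem_of_card_fiber_eq {V ι : Type*} [Fintype V] [DecidableEq ι]
    (f : V → ι) (q : ℕ) (hf : ∀ j, #{i | f i = j} = q) (S : Finset ι) :
    #{i | f i ∈ S} = #S * q := by
  rw [card_eq_sum_card_fiberwise (s := {i | f i ∈ S}) (t := S) fun i hi => by simpa using hi,
    sum_const_nat]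
  intro j hj
  rw [← hf j, filter_filter]
  congr 1
  ext i
  simp only [mem_filter, mem_univ, true_and, and_iff_right_iff_imp]
  rintro rfl
  exact hj

theorem le_card_filter_notMem_of_injective {ι C : Type*} [Fintype ι] [DecidableEq C]
    {c : ι → C} (hc : Function.Injective c) (W : Finset C) :
    Fintype.card ι - #W ≤ #{j | c j ∉ W} := by
  have hin : #{j | c j ∈ W} ≤ #W :=
    card_le_card_of_injOn c (fun j hj => (mem_filter.mp hj).2) hc.injOn
  have hsplit := card_filter_add_card_filter_not (s := univ) (fun j => c j ∈ W)
  rw [card_univ] at hsplit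
  omega

theorem eq_or_eq_of_rank_le_two {C : Type*} {rk : C → ℕ} (hinj : Function.Injective rk)
    (hpos : ∀ x, 1 ≤ rk x) {a b x : C} (ha : rk a = 1) (hb : rk b = 2) (hx : rk x ≤ 2) :
    x = a ∨ x = b := by
  have := hpos x
  interval_cases h : rk x
  · exact .inl (hinj (h.trans ha.symm))
  · exact .inr (hinj (h.trans hb.symm))

/-- `rk i x` is the position of `x` in voter `i`'s strict ranking, `1` being the top. -/
theorem rankJR_size_two_contains_d_general {V C : Type*} [Fintype V] [Fintype C] [DecidableEq C]
    (q ℓ : ℕ) (hℓ : 4 ≤ ℓ)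
    (group : V → Fin ℓ)
    (hgroup : ∀ j, (Finset.univ.filter (fun i => group i = j)).card = q)
    (hn : Fintype.card V = ℓ * q)
    (c : Fin ℓ → C) (hc : Function.Injective c) (d : C)
    (rk : V → C → ℕ)
    (hinj : ∀ i, Function.Injective (rk i)) (hpos : ∀ i x, 1 ≤ rk i x)
    (htop : ∀ i, rk i (c (group i)) = 1) (hsecond : ∀ i, rk i d = 2)
    (W : Finset C) (hW : W.card = 2)
    (hJR : ∀ r : ℕ, 1 ≤ r → r ≤ Fintype.card C →
      ∀ N' : Finset V, (Fintype.card V : ℚ) / 2 ≤ (N'.card : ℚ) →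
      (∃ x, ∀ i ∈ N', rk i x ≤ r) →
      ∃ x ∈ W, ∃ i ∈ N', rk i x ≤ r) :
    d ∈ W := by
  by_contra hdW
  set S : Finset (Fin ℓ) := {j | c j ∉ W}
  have hS : ℓ - 2 ≤ #S := by
    simpa [hW] using le_card_filter_notMem_of_injective hc W
  have hhalf : (Fintype.card V : ℚ) / 2 ≤ #{i | group i ∈ S} := by
    rw [card_filter_mem_of_card_fiber_eq group q hgroup S, hn]
    have : ℓ * q ≤ #S * q * 2 := by
      rw [mul_right_comm]
      exact Nat.mul_le_mul_right q (by omega)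
    rw [div_le_iff₀ two_pos]
    exact_mod_cast this
  have hC : 2 ≤ Fintype.card C := hW ▸ card_le_univ W
  obtain ⟨x, hxW, i, hi, hxi⟩ :=
    hJR 2 one_le_two hC _ hhalf ⟨d, fun i _ => (hsecond i).le⟩
  have hci : c (group i) ∉ W := (mem_filter.mp (mem_filter.mp hi).2).2
  rcases eq_or_eq_of_rank_le_two (hinj i) (hpos i) (htop i) (hsecond i) hxi with rfl | rfl
  · exact hci hxW
  · exact hdW hxW

/-- In a profile with `ℓ = n/q` groups of `q` voters each, where group `j` ranks candidate
`c j` first and candidate `d` second (and `ℓ ≥ 4`), any committee of size 2 satisfying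
Rank-JR must contain `d`. Voter `i`'s strict ranking is encoded by the rank function
`rk i` (injective, ranks at least 1, smaller = better). -/
theorem rankJR_size_two_contains_d {V C : Type*} [Fintype V] [Fintype C] [DecidableEq V]
    [DecidableEq C]
    (q ℓ : ℕ) (hℓ : 4 ≤ ℓ)
    (group : V → Fin ℓ)
    (hgroup : ∀ j, (Finset.univ.filter (fun i => group i = j)).card = q)
    (hn : Fintype.card V = ℓ * q)
    (c : Fin ℓ → C) (hc : Function.Injective c) (d : C) (hd : ∀ j, c j ≠ d)
    (rk : V → C → ℕ)
    (hinj : ∀ i, Function.Injective (rk i)) (hpos : ∀ i x, 1 ≤ rk i x)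
    (htop : ∀ i, rk i (c (group i)) = 1) (hsecond : ∀ i, rk i d = 2)
    (W : Finset C) (hW : W.card = 2)
    (hJR : ∀ r : ℕ, 1 ≤ r → r ≤ Fintype.card C →
      ∀ N' : Finset V, (Fintype.card V : ℚ) / 2 ≤ (N'.card : ℚ) →
      (∃ x, ∀ i ∈ N', rk i x ≤ r) →
      ∃ x ∈ W, ∃ i ∈ N', rk i x ≤ r) :
    d ∈ W :=
  rankJR_size_two_contains_d_general q ℓ hℓ group hgroup hn c hc d rk hinj hpos htop hsecond W hW
    hJR
end

section
/- Let R be a strict ranking profile over m candidates in which at least α·n voters report the ranking ≿ = c_1 ≻ c_2 ≻ … ≻ c_m, and let ▷ be a ranking satisfying Hare-PSC for R. Then the swap distance between ≿ and ▷ is at most (1 − α + (1+α)/m)·m(m−1)/2. -/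
open Finset

/-- `N'` is a solid coalition supporting `C'`: every voter in `N'` strictly prefers every
candidate of `C'` to every candidate outside `C'` (preferences are given by rank functions
`rk`, smaller rank = more preferred). -/
def Solid {V C : Type*} (rk : V → C → ℕ) (N' : Finset V) (C' : Finset C) : Prop :=
  ∀ i ∈ N', ∀ x ∈ C', ∀ y, y ∉ C' → rk i x < rk i y

/-- The top-`k` candidates of the output ranking `pos` (positions are 0-indexed). -/
def topSet {C : Type*} [Fintype C] (pos : C ≃ Fin (Fintype.card C)) (k : ℕ) : Finset C :=
  Finset.univ.filter (fun x => (pos x : ℕ) < k)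

/-- The ranking `pos` satisfies Hare-PSC for the profile `rk`. -/
def HarePSCranking {V C : Type*} [Fintype V] [Fintype C] [DecidableEq C]
    (rk : V → C → ℕ) (pos : C ≃ Fin (Fintype.card C)) : Prop :=
  ∀ k, 1 ≤ k → k ≤ Fintype.card C → ∀ ℓ : ℕ, 1 ≤ ℓ →
    ∀ (N' : Finset V) (C' : Finset C), Solid rk N' C' →
    (ℓ : ℚ) * (Fintype.card V : ℚ) / (k : ℚ) ≤ (N'.card : ℚ) →
    C' ⊆ topSet pos k ∨ ℓ ≤ (topSet pos k ∩ C').card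

/-- The swap distance between the input ranking `e` (where `e j` is the candidate in
position `j`) and the output ranking `pos`: the number of pairs on which they disagree. -/
def swapDist {C : Type*} [Fintype C] (e : Fin (Fintype.card C) ≃ C)
    (pos : C ≃ Fin (Fintype.card C)) : ℕ :=
  (Finset.univ.filter (fun p : Fin (Fintype.card C) × Fin (Fintype.card C) =>
    p.1 < p.2 ∧ pos (e p.2) < pos (e p.1))).card

/-! Write `q = pos ∘ e`, so that `q i` is the position in `▷` of the candidate `c_{i+1}`. The voters
of `N0` form a solid coalition behind every prefix `{c_1, …, c_r}`, so Hare-PSC with `k = t + 1`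
and `ℓ = r` puts the whole prefix into the top `t + 1` of `▷` as soon as `r ≤ α (t + 1)`. Then
each of the `⌊α (t + 1)⌋` first candidates `b` of `≿` is ranked by `▷` above the candidate in
position `t + 1`, and these pairs `(t, b)` give distinct pairs on which `≿` and `▷` agree. Hence
at most `m (m - 1) / 2 - ∑_{s=1}^{m-1} ⌊α s⌋` pairs disagree, and the sawtooth estimate
`2 ∑_{s=1}^{n} ⌊α s⌋ ≥ n (α n - 1)` for `α ∈ [0, 1]` turns this into the bound. -/

theorem Equiv.Perm.card_inversions_add_sum_le {M : ℕ} (q : Equiv.Perm (Fin M)) (f : ℕ → ℕ)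
    (hf : ∀ t, f t ≤ t + 1)
    (hq : ∀ (i : Fin M) (t : ℕ), t + 1 < M → (i : ℕ) < f t → (q i : ℕ) ≤ t) :
    #{p : Fin M × Fin M | p.1 < p.2 ∧ q p.2 < q p.1} + ∑ t ∈ range (M - 1), f t ≤ M.choose 2 := by
  set T : Finset (Fin M × Fin M) := {p | p.1 < p.2 ∧ q p.1 < q p.2}
  have hsplit : #{p : Fin M × Fin M | p.1 < p.2 ∧ q p.2 < q p.1} + #T = M.choose 2 := by
    have hpairs : #{p : Fin M × Fin M | p.1 < p.2} = M.choose 2 := by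
      simpa using Fintype.card_product_filter_lt (α := Fin M)
    rw [← card_union_of_disjoint, ← hpairs]
    · congr 1
      ext p
      simp only [T, mem_union, mem_filter, mem_univ, true_and, ← and_or_left, and_iff_left_iff_imp]
      exact fun h => lt_or_gt_of_ne (q.injective.ne h.ne')
    · exact disjoint_filter.2 fun p _ h h' => h.2.asymm h'.2
  set G := (range (M - 1)).sigma fun t => ({b : Fin M | (b : ℕ) < f t} : Finset (Fin M))
  have hsum : ∑ t ∈ range (M - 1), f t = #G := by
    rw [card_sigma]
    refine sum_congr rfl fun t ht => ?_
    rw [Fin.card_filter_val_lt, min_eq_right]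
    have := hf t
    have := mem_range.1 ht
    omega
  -- `(b, q⁻¹ (t + 1))` is a non-inversion: `b` is guaranteed a place in the top `t + 1`.
  have hsurj : #G ≤ #T := by
    refine card_le_card_of_surjOn (fun p => ⟨(q p.2 : ℕ) - 1, p.1⟩) ?_
    rintro ⟨t, b⟩ htb
    simp only [G, coe_sigma, Set.mem_sigma_iff, coe_range, Set.mem_Iio, coe_filter, mem_univ,
      true_and, Set.mem_ofPred_eq] at htb
    obtain ⟨ht, hb⟩ := htb
    set a := q.symm ⟨t + 1, by omega⟩
    have hqa : (q a : ℕ) = t + 1 := by simp [a]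
    have hqb := hq b t (by omega) hb
    have hba : b < a := by
      by_contra! hab
      have := hq a t (by omega) (lt_of_le_of_lt (Fin.le_def.1 hab) hb)
      omega
    refine ⟨(b, a), ?_, ?_⟩
    · simp only [T, coe_filter, mem_univ, true_and, Set.mem_ofPred_eq, Fin.lt_def]
      omega
    · simp [hqa]
  omega

section FloorSum

variable {K : Type*} [Field K] [LinearOrder K] [IsStrictOrderedRing K] [FloorRing K]

theorem floor_add_eq_or_eq_add_one {x α : K} (hα0 : 0 ≤ α) (hα1 : α ≤ 1) :
    ⌊x + α⌋ = ⌊x⌋ ∨ ⌊x + α⌋ = ⌊x⌋ + 1 := by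
  have h1 : ⌊x⌋ ≤ ⌊x + α⌋ := Int.floor_mono (by linarith)
  have h2 : ⌊x + α⌋ ≤ ⌊x⌋ + 1 := by
    rw [← Int.floor_add_one]
    exact Int.floor_mono (by linarith)
  omega

/-- The correction term `fract (α n) * (1 - fract (α n))` is what makes the bound inductive. -/
theorem mul_mul_sub_one_add_fract_le_two_mul_sum_floor {α : K} (hα0 : 0 ≤ α) (hα1 : α ≤ 1)
    (n : ℕ) :
    α * (n * (α * n - 1)) + Int.fract (α * n) * (1 - Int.fract (α * n)) ≤
      2 * α * ∑ s ∈ range n, (⌊α * (s + 1)⌋₊ : K) := by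
  induction n with
  | zero => simp
  | succ n ih =>
    have hfloor : (⌊α * n + α⌋₊ : K) = ⌊α * n + α⌋ :=
      natCast_floor_eq_intCast_floor (by positivity)
    have hfr0 := Int.fract_nonneg (α * n)
    have hfr1 := Int.fract_lt_one (α * n)
    have hfr0' := Int.fract_nonneg (α * n + α)
    rw [sum_range_succ, Nat.cast_succ, mul_add_one, hfloor]
    simp only [Int.fract] at ih hfr0 hfr1 hfr0' ⊢
    rcases floor_add_eq_or_eq_add_one (x := α * n) hα0 hα1 with h | h <;>
      rw [h] at hfr0' ⊢ <;> push_cast at ih hfr0' ⊢ <;> nlinarith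

theorem mul_mul_sub_one_le_two_mul_sum_floor {α : K} (hα0 : 0 ≤ α) (hα1 : α ≤ 1) (n : ℕ) :
    n * (α * n - 1) ≤ 2 * ∑ s ∈ range n, (⌊α * (s + 1)⌋₊ : K) := by
  rcases hα0.eq_or_lt with rfl | hα
  · simp only [zero_mul, Nat.floor_zero, Nat.cast_zero, sum_const_zero, mul_zero]
    nlinarith
  · have hpot := mul_mul_sub_one_add_fract_le_two_mul_sum_floor hα0 hα1 n
    have hfr : 0 ≤ Int.fract (α * n) * (1 - Int.fract (α * n)) :=
      mul_nonneg (Int.fract_nonneg _) (sub_nonneg.2 (Int.fract_lt_one _).le)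
    nlinarith

end FloorSum

section PSC

variable {V C : Type*}

theorem solid_map_Iic {m : ℕ} {rk : V → C → ℕ} {N : Finset V} (e : Fin m ≃ C)
    (hrep : ∀ i ∈ N, ∀ j, rk i (e j) = (j : ℕ) + 1) (i : Fin m) :
    Solid rk N ((Iic i).map e.toEmbedding) := by
  intro v hv x hx y hy
  obtain ⟨j, hj, rfl⟩ := mem_map.1 hx
  obtain ⟨j', rfl⟩ := e.surjective y
  have hj' : ¬ j' ≤ i := fun h => hy (mem_map_of_mem _ (mem_Iic.2 h))
  rw [mem_Iic] at hj
  simp only [Equiv.coe_toEmbedding, hrep v hv]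
  omega

variable [Fintype V] [Fintype C] [DecidableEq C] {rk : V → C → ℕ}
  {pos : C ≃ Fin (Fintype.card C)}

theorem HarePSCranking.subset_topSet (hH : HarePSCranking rk pos) {k : ℕ} (hk : 1 ≤ k)
    (hkm : k ≤ Fintype.card C) {N : Finset V} {C' : Finset C} (hC' : C'.Nonempty)
    (hs : Solid rk N C') (hN : (#C' : ℚ) * Fintype.card V / k ≤ #N) :
    C' ⊆ topSet pos k := by
  rcases hH k hk hkm #C' hC'.card_pos N C' hs hN with h | h
  · exact h
  · rw [← eq_of_subset_of_card_le inter_subset_right h]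
    exact inter_subset_left

theorem HarePSCranking.pos_le_of_succ_le_mul (hH : HarePSCranking rk pos)
    (e : Fin (Fintype.card C) ≃ C) {N : Finset V} (hrep : ∀ i ∈ N, ∀ j, rk i (e j) = (j : ℕ) + 1)
    {α : ℚ} (hN : α * Fintype.card V ≤ #N) {i : Fin (Fintype.card C)} {t : ℕ}
    (ht : t + 1 ≤ Fintype.card C) (hit : ((i : ℕ) + 1 : ℚ) ≤ α * (t + 1)) :
    (pos (e i) : ℕ) ≤ t := by
  have hcard : (#((Iic i).map e.toEmbedding) : ℚ) = (i : ℕ) + 1 := by simp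
  have hsub := hH.subset_topSet (k := t + 1) (by omega) ht ⟨e i, by simp⟩ (solid_map_Iic e hrep i)
    (by
      rw [hcard, div_le_iff₀ (by positivity)]
      push_cast
      nlinarith [Nat.cast_nonneg (α := ℚ) (Fintype.card V)])
  have hmem := hsub (mem_map_of_mem _ (mem_Iic.2 le_rfl))
  simp only [topSet, Equiv.coe_toEmbedding, mem_filter, mem_univ, true_and] at hmem
  omega

end PSC

theorem swap_bound_hare_general {V C : Type*} [Fintype V] [Fintype C] [DecidableEq C]
    (hm : 1 ≤ Fintype.card C)
    (rk : V → C → ℕ)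
    (e : Fin (Fintype.card C) ≃ C)
    (α : ℚ) (hα0 : 0 ≤ α) (hα1 : α ≤ 1)
    (N0 : Finset V) (hN0 : α * (Fintype.card V : ℚ) ≤ (N0.card : ℚ))
    (hrep : ∀ i ∈ N0, ∀ j, rk i (e j) = (j : ℕ) + 1)
    (pos : C ≃ Fin (Fintype.card C)) (hH : HarePSCranking rk pos) :
    (swapDist e pos : ℚ) ≤
      (1 - α + (1 + α) / (Fintype.card C : ℚ)) *
        ((Fintype.card C : ℚ) * ((Fintype.card C : ℚ) - 1) / 2) := by
  have hinv := Equiv.Perm.card_inversions_add_sum_le (e.trans pos) (fun t => ⌊α * (t + 1)⌋₊)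
    (fun t => Nat.floor_le_of_le (by push_cast; nlinarith))
    (fun i t ht hi => hH.pos_le_of_succ_le_mul e hrep hN0 ht.le (by
      have := (Nat.le_floor_iff (by positivity)).1 (Nat.succ_le_of_lt hi)
      exact_mod_cast this))
  have hinvℚ : (swapDist e pos : ℚ) + ∑ t ∈ range (Fintype.card C - 1), (⌊α * (t + 1)⌋₊ : ℚ) ≤
      Fintype.card C * (Fintype.card C - 1) / 2 := by
    rw [← Nat.cast_choose_two]
    exact_mod_cast hinv
  have hfloor := mul_mul_sub_one_le_two_mul_sum_floor hα0 hα1 (Fintype.card C - 1)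
  rw [Nat.cast_sub hm, Nat.cast_one] at hfloor
  have hm0 : (Fintype.card C : ℚ) ≠ 0 := Nat.cast_ne_zero.2 (by omega)
  calc (swapDist e pos : ℚ)
      ≤ Fintype.card C * (Fintype.card C - 1) / 2 -
          (Fintype.card C - 1) * (α * (Fintype.card C - 1) - 1) / 2 := by linarith
    _ = _ := by field_simp; ring

/-- If at least `α·n` voters report the ranking `e = c_1 ≻ … ≻ c_m` and `pos` satisfies
Hare-PSC, then the swap distance between them is at most `(1 − α + (1+α)/m)·m(m−1)/2`. -/
theorem swap_bound_hare {V C : Type*} [Fintype V] [Fintype C] [DecidableEq C]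
    (hm : 1 ≤ Fintype.card C)
    (rk : V → C → ℕ)
    (hinj : ∀ i, Function.Injective (rk i)) (hpos1 : ∀ i x, 1 ≤ rk i x)
    (e : Fin (Fintype.card C) ≃ C)
    (α : ℚ) (hα0 : 0 ≤ α) (hα1 : α ≤ 1)
    (N0 : Finset V) (hN0 : α * (Fintype.card V : ℚ) ≤ (N0.card : ℚ))
    (hrep : ∀ i ∈ N0, ∀ j, rk i (e j) = (j : ℕ) + 1)
    (pos : C ≃ Fin (Fintype.card C)) (hH : HarePSCranking rk pos) :
    (swapDist e pos : ℚ) ≤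
      (1 - α + (1 + α) / (Fintype.card C : ℚ)) *
        ((Fintype.card C : ℚ) * ((Fintype.card C : ℚ) - 1) / 2) :=
  swap_bound_hare_general hm rk e α hα0 hα1 N0 hN0 hrep pos hH
end

section
/- In any profile of weak orders, for every committee W and every set D of candidates with |D \ W| > 1 such that D is supported by some generalized solid coalition, there exists a pair (N'', D') with D' ⊊ D, D' not contained in W, and N'' a nonempty generalized solid coalition supporting D'. In particular, taking any voter i supporting D, a least-preferred element d* of D \ W for voter i, and D' = {c ∈ D \ {d*} : c ≿_i d*}, the singleton {i} is a generalized solid coalition supporting D' with D' ⊊ D and D' ⊄ W. -/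
open Finset

/-- `N'` is a generalized solid coalition supporting `C'`:
every voter in `N'` weakly prefers every candidate in `C'` to every candidate outside `C'`. -/
def GSC {V C : Type*} (pref : V → C → C → Prop) (N' : Finset V) (C' : Finset C) : Prop :=
  ∀ i ∈ N', ∀ c' ∈ C', ∀ c, c ∉ C' → pref i c' c

/-!
Let voter `i` support `D` and let `d` be a candidate of `D \ W` that `i` ranks lowest. The set
`D'` of candidates of `D` other than `d` that `i` ranks weakly above `d` is still supported by `i`:
a candidate of `D` left out of `D'` is `d` itself or ranked strictly below `d`, and candidates
outside `D` are ranked below all of `D`. Since `d ∉ D'`, `D'` is a proper subset of `D`, and any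
second candidate of `D \ W` lies in `D'`, so `D' ⊄ W`.
-/

theorem Finset.exists_forall_rel_of_total {C : Type*} {r : C → C → Prop}
    (htot : ∀ x y, r x y ∨ r y x) (htr : ∀ ⦃x y z⦄, r x y → r y z → r x z)
    {S : Finset C} (hS : S.Nonempty) : ∃ d ∈ S, ∀ c ∈ S, r c d := by
  induction hS using Finset.Nonempty.cons_induction with
  | singleton a => exact ⟨a, mem_singleton_self a, by simpa using (htot a a).elim id id⟩
  | cons a s _ _ ih =>
    obtain ⟨d, hds, hd⟩ := ih
    rcases htot a d with had | hda
    · exact ⟨d, mem_cons_of_mem hds, by simpa [had] using hd⟩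
    · exact ⟨a, mem_cons_self a s, by
        simpa [(htot a a).elim id id] using fun c hc => htr (hd c hc) hda⟩

section Refinement

variable {C : Type*} [DecidableEq C]

open Classical in
noncomputable def aboveIn (r : C → C → Prop) (D : Finset C) (d : C) : Finset C :=
  {c ∈ D.erase d | r c d}

theorem mem_aboveIn {r : C → C → Prop} {D : Finset C} {d c : C} :
    c ∈ aboveIn r D d ↔ c ∈ D ∧ c ≠ d ∧ r c d := by
  simp [aboveIn, and_comm, and_assoc]

theorem aboveIn_ssubset (r : C → C → Prop) {D : Finset C} {d : C} (hd : d ∈ D) :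
    aboveIn r D d ⊂ D :=
  ssubset_iff_of_subset (fun _ hc => (mem_aboveIn.1 hc).1) |>.2
    ⟨d, hd, fun h => (mem_aboveIn.1 h).2.1 rfl⟩

theorem aboveIn_supported {r : C → C → Prop} (htot : ∀ x y, r x y ∨ r y x)
    (htr : ∀ ⦃x y z⦄, r x y → r y z → r x z) {D : Finset C} (hD : ∀ d ∈ D, ∀ c ∉ D, r d c)
    (d : C) : ∀ c' ∈ aboveIn r D d, ∀ c ∉ aboveIn r D d, r c' c := by
  intro c' hc' c hc
  obtain ⟨hc'D, -, hc'd⟩ := mem_aboveIn.1 hc'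
  by_cases hcD : c ∈ D
  · obtain rfl | hcd := eq_or_ne c d
    · exact hc'd
    · have hdc : r d c := (htot c d).resolve_left fun hcd' => hc (mem_aboveIn.2 ⟨hcD, hcd, hcd'⟩)
      exact htr hc'd hdc
  · exact hD c' hc'D c hcD

theorem aboveIn_not_subset {r : C → C → Prop} {D W : Finset C} {d c : C}
    (hc : c ∈ D \ W) (hcd : c ≠ d) (hrc : r c d) : ¬ aboveIn r D d ⊆ W := fun h =>
  (mem_sdiff.1 hc).2 (h (mem_aboveIn.2 ⟨(mem_sdiff.1 hc).1, hcd, hrc⟩))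

end Refinement

theorem refinement_exists_general {V C : Type*} [DecidableEq C]
    (pref : V → C → C → Prop)
    (hTotal : ∀ i x y, pref i x y ∨ pref i y x)
    (hTrans : ∀ i, Transitive (pref i))
    (W D : Finset C) (hD : 1 < (D \ W).card)
    (hsupp : ∃ i : V, ∀ d ∈ D, ∀ c, c ∉ D → pref i d c) :
    ∃ (N'' : Finset V) (D' : Finset C),
      N''.Nonempty ∧ GSC pref N'' D' ∧ D' ⊂ D ∧ ¬ D' ⊆ W := by
  obtain ⟨i, hi⟩ := hsupp
  obtain ⟨d, hd, hd_least⟩ := Finset.exists_forall_rel_of_total (hTotal i)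
    (hTrans i) (card_pos.1 (by omega) : (D \ W).Nonempty)
  obtain ⟨c, hc, hcd⟩ := exists_mem_ne hD d
  refine ⟨{i}, aboveIn (pref i) D d, singleton_nonempty i, ?_,
    aboveIn_ssubset _ (mem_sdiff.1 hd).1, aboveIn_not_subset hc hcd (hd_least c hc)⟩
  intro j hj
  rw [mem_singleton.1 hj]
  exact aboveIn_supported (hTotal i) (hTrans i) hi d

/-- For every committee `W` and every candidate set `D` with `|D \ W| > 1` that is supported
by some (nonempty) generalized solid coalition, there is a pair `(N'', D')` with `D' ⊊ D`,
`D'` not contained in `W`, and `N''` a nonempty generalized solid coalition supporting `D'`. -/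
theorem refinement_exists {V C : Type*} [Fintype C] [DecidableEq C] [DecidableEq V]
    (pref : V → C → C → Prop)
    (hTotal : ∀ i x y, pref i x y ∨ pref i y x)
    (hTrans : ∀ i, Transitive (pref i))
    (W D : Finset C) (hD : 1 < (D \ W).card)
    (hsupp : ∃ i : V, ∀ d ∈ D, ∀ c, c ∉ D → pref i d c) :
    ∃ (N'' : Finset V) (D' : Finset C),
      N''.Nonempty ∧ GSC pref N'' D' ∧ D' ⊂ D ∧ ¬ D' ⊆ W :=
  refinement_exists_general pref hTotal hTrans W D hD hsupp
end

section
/- In the 3-voter profile where voter 1 ranks a ≻ d ≻ b ≻ c, voter 2 ranks b ≻ d ≻ c ≻ a, and voter 3 ranks c ≻ d ≻ a ≻ b, the unique committee of size 3 satisfying Droop-PSC is {a,b,c}; consequently any committee monotone rule satisfying Droop-PSC cannot select {d} for k = 1 on this profile. -/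
open Finset

/-- The profile of Figure 5: candidates `a, b, c, d` are `0, 1, 2, 3 : Fin 4`;
voter 0 ranks `a ≻ d ≻ b ≻ c`, voter 1 ranks `b ≻ d ≻ c ≻ a`, voter 2 ranks
`c ≻ d ≻ a ≻ b`. `exampleRk i x` is the rank of candidate `x` for voter `i`. -/
def exampleRk : Fin 3 → Fin 4 → ℕ := ![![1, 3, 4, 2], ![4, 1, 3, 2], ![3, 4, 1, 2]]

/-- `N'` is a solid coalition supporting `C'` in this profile. -/
def SolidEx (N' : Finset (Fin 3)) (C' : Finset (Fin 4)) : Prop :=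
  ∀ i ∈ N', ∀ x ∈ C', ∀ y, y ∉ C' → exampleRk i x < exampleRk i y

/-- The committee `W` satisfies Droop-PSC for committee size `k` in this profile
(there are `n = 3` voters). -/
def DroopEx (W : Finset (Fin 4)) (k : ℕ) : Prop :=
  ∀ ℓ : ℕ, 1 ≤ ℓ → ∀ (N' : Finset (Fin 3)) (C' : Finset (Fin 4)), SolidEx N' C' →
    (ℓ : ℚ) * 3 / ((k : ℚ) + 1) < (N'.card : ℚ) →
    C' ⊆ W ∨ ℓ ≤ (W ∩ C').card

/-! Voter `i` ranks candidate `i` first, and for `k = 3` a single voter exceeds the Droop quota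
`3/4`, so each of `a, b, c` must be elected; with three seats this pins down `W = {a, b, c}`,
which does not contain `d`. -/

theorem solidEx_singleton_castSucc (i : Fin 3) : SolidEx {i} {i.castSucc} := by
  unfold SolidEx
  fin_cases i <;> decide

theorem DroopEx.mem_of_solidEx_singleton {W : Finset (Fin 4)} {k : ℕ} (hW : DroopEx W k)
    {N' : Finset (Fin 3)} {x : Fin 4} (hsolid : SolidEx N' {x})
    (hquota : (3 : ℚ) / ((k : ℚ) + 1) < (N'.card : ℚ)) : x ∈ W := by
  rcases hW 1 le_rfl N' {x} hsolid (by simpa using hquota) with hsub | hcard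
  · exact singleton_subset_iff.mp hsub
  · obtain ⟨y, hy⟩ := card_pos.mp hcard
    obtain ⟨hyW, rfl⟩ := mem_inter.mp hy |>.imp_right mem_singleton.mp
    exact hyW

theorem DroopEx.castSucc_mem {W : Finset (Fin 4)} (hW : DroopEx W 3) (i : Fin 3) :
    i.castSucc ∈ W :=
  hW.mem_of_solidEx_singleton (solidEx_singleton_castSucc i) (by norm_num)

theorem DroopEx.eq_of_card_eq_three {W : Finset (Fin 4)} (hW : DroopEx W 3) (hcard : W.card = 3) :
    W = {0, 1, 2} := by
  have habc : ({0, 1, 2} : Finset (Fin 4)) ⊆ W := by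
    simpa [insert_subset_iff] using
      ⟨hW.castSucc_mem 0, hW.castSucc_mem 1, hW.castSucc_mem 2⟩
  exact (eq_of_subset_of_card_le habc (by rw [hcard]; rfl)).symm

/-- In this profile, the unique size-3 committee satisfying Droop-PSC is `{a, b, c}`;
consequently, any committee monotone rule satisfying Droop-PSC cannot select `{d}`
for `k = 1`. -/
theorem example_unique_droop_committee :
    (∀ W : Finset (Fin 4), W.card = 3 → DroopEx W 3 → W = {0, 1, 2}) ∧
    (∀ W₁ W₃ : Finset (Fin 4), W₁.card = 1 → W₃.card = 3 →
      DroopEx W₁ 1 → DroopEx W₃ 3 → W₁ ⊆ W₃ → W₁ ≠ {3}) := by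
  refine ⟨fun W hcard hW => hW.eq_of_card_eq_three hcard, ?_⟩
  rintro W₁ W₃ - hcard₃ - hW₃ hsub rfl
  have hd : (3 : Fin 4) ∈ ({0, 1, 2} : Finset (Fin 4)) :=
    hW₃.eq_of_card_eq_three hcard₃ ▸ hsub (mem_singleton_self 3)
  simp at hd
end
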